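/- Let P be a finite-dimensional φ-free Poisson algebra (φ(P) = 0). Then Zsoc(P) = N(P) = Ann_P(Soc(P)), where Zsoc(P) is the sum of the minimal zero ideals, N(P) is the nilradical, and Soc(P) is the sum of all minimal ideals. -/

import Mathlib

/-!  Framework: dialgebras and Poisson algebras as bilinear structures on a module. -/

variable {F P : Type*} [Field F] [AddCommGroup P] [Module F P]

/-- A dialgebra: a vector space with two bilinear multiplications. -/
structure Dialgebra (F P : Type*) [Field F] [AddCommGroup P] [Module F P] where
  mul : P →ₗ[F] P →ₗ[F] P
  bracket : P →ₗ[F] P →ₗ[F] P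

namespace Dialgebra

variable (D : Dialgebra F P)

/-- Span of the set of products `a·b`, `a ∈ A`, `b ∈ B`. -/
def pmul (A B : Submodule F P) : Submodule F P :=
  Submodule.span F (Set.image2 (fun a b => D.mul a b) (A : Set P) (B : Set P))

/-- Span of the set of brackets `[a,b]`, `a ∈ A`, `b ∈ B`. -/
def pbra (A B : Submodule F P) : Submodule F P :=
  Submodule.span F (Set.image2 (fun a b => D.bracket a b) (A : Set P) (B : Set P))

/-- `A·B + [A,B]`. -/
def psq (A B : Submodule F P) : Submodule F P := D.pmul A B ⊔ D.pbra A B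

/-- A subalgebra: a subspace closed under both products. -/
def IsSubalgebra (A : Submodule F P) : Prop := D.psq A A ≤ A

/-- An ideal of the dialgebra. -/
def IsIdeal (A : Submodule F P) : Prop :=
  D.pmul A ⊤ ≤ A ∧ D.pmul ⊤ A ≤ A ∧ D.pbra A ⊤ ≤ A ∧ D.pbra ⊤ A ≤ A

/-- `A` is an ideal of the subalgebra `U`. -/
def IsIdealIn (A U : Submodule F P) : Prop :=
  A ≤ U ∧ D.pmul A U ≤ A ∧ D.pmul U A ≤ A ∧ D.pbra A U ≤ A ∧ D.pbra U A ≤ A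

/-- Lower central series of `B`: `B^1 = B`, `B^{n+1} = B^n·B + [B^n,B]`. -/
def lcs (B : Submodule F P) : ℕ → Submodule F P
  | 0 => B
  | n + 1 => D.psq (lcs B n) B

/-- `B` is nilpotent as a dialgebra. -/
def IsNilpotentSub (B : Submodule F P) : Prop := ∃ n, D.lcs B n = ⊥

/-- Derived series of `B`. -/
def ders (B : Submodule F P) : ℕ → Submodule F P
  | 0 => B
  | n + 1 => D.psq (ders B n) (ders B n)

/-- `B` is solvable as a dialgebra. -/
def IsSolvableSub (B : Submodule F P) : Prop := ∃ n, D.ders B n = ⊥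

/-- Associative powers: `apow B n = B_A^{n+1}`, i.e. `apow B 0 = B_A^1 = B`. -/
def apow (B : Submodule F P) : ℕ → Submodule F P
  | 0 => B
  | n + 1 => D.pmul (apow B n) B

/-- Lie powers: `lpow B n = B_L^{n+1}`. -/
def lpow (B : Submodule F P) : ℕ → Submodule F P
  | 0 => B
  | n + 1 => D.pbra (lpow B n) B

/-- Associative nilpotency of `B`. -/
def AssocNilpotent (B : Submodule F P) : Prop := ∃ n, D.apow B n = ⊥

/-- Lie nilpotency of `B`. -/
def LieNilpotent (B : Submodule F P) : Prop := ∃ n, D.lpow B n = ⊥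

/-- `mulPows B X n = X·B_A^n` (with the convention that it is `X` for `n = 0`). -/
def mulPows (B X : Submodule F P) : ℕ → Submodule F P
  | 0 => X
  | n + 1 => D.pmul (mulPows B X n) B

/-- `M` is a maximal (proper) subalgebra of the subalgebra `U`. -/
def IsMaximalSubalgebraIn (U M : Submodule F P) : Prop :=
  D.IsSubalgebra M ∧ M < U ∧ ∀ K, D.IsSubalgebra K → M ≤ K → K ≤ U → K = M ∨ K = U

/-- Frattini subalgebra of the subalgebra `U`: intersection of its maximal subalgebras. -/
def frattiniIn (U : Submodule F P) : Submodule F P :=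
  U ⊓ sInf {M | D.IsMaximalSubalgebraIn U M}

/-- Frattini ideal of the subalgebra `U`: largest ideal of `U` inside `frattiniIn U`. -/
def phiIn (U : Submodule F P) : Submodule F P :=
  sSup {I | D.IsIdealIn I U ∧ I ≤ D.frattiniIn U}

/-- Frattini subalgebra of the dialgebra. -/
def frattini : Submodule F P := D.frattiniIn ⊤

/-- Frattini ideal of the dialgebra. -/
def phi : Submodule F P := sSup {I | D.IsIdeal I ∧ I ≤ D.frattini}

/-- Minimal ideal. -/
def IsMinimalIdeal (A : Submodule F P) : Prop :=
  D.IsIdeal A ∧ A ≠ ⊥ ∧ ∀ I, D.IsIdeal I → I ≤ A → I = ⊥ ∨ I = A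

/-- Zero (trivial-multiplication) subspace. -/
def IsZeroAlg (A : Submodule F P) : Prop := D.pmul A A = ⊥ ∧ D.pbra A A = ⊥

/-- Zero socle: sum of the minimal zero ideals. -/
def zsoc : Submodule F P := sSup {A | D.IsMinimalIdeal A ∧ D.IsZeroAlg A}

/-- Socle: sum of the minimal ideals. -/
def soc : Submodule F P := sSup {A | D.IsMinimalIdeal A}

/-- Annihilator of `B` in the algebra. -/
def annih (B : Submodule F P) : Submodule F P where
  carrier := {x | ∀ b ∈ B, D.mul x b = 0 ∧ D.bracket x b = 0}
  add_mem' := by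
    intro x y hx hy b hb
    have h1 := hx b hb; have h2 := hy b hb
    constructor <;> simp [map_add, LinearMap.add_apply, h1.1, h1.2, h2.1, h2.2]
  zero_mem' := by intro b hb; simp
  smul_mem' := by
    intro c x hx b hb
    have h := hx b hb
    constructor <;> simp [map_smul, LinearMap.smul_apply, h.1, h.2]

/-- `R` is the solvable radical: the largest solvable ideal. -/
def IsRadical (R : Submodule F P) : Prop :=
  D.IsIdeal R ∧ D.IsSolvableSub R ∧ ∀ I, D.IsIdeal I → D.IsSolvableSub I → I ≤ R

/-- `N` is the nilradical: the largest nilpotent ideal. -/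
def IsNilradical (N : Submodule F P) : Prop :=
  D.IsIdeal N ∧ D.IsNilpotentSub N ∧ ∀ I, D.IsIdeal I → D.IsNilpotentSub I → I ≤ N

end Dialgebra

/-- A Poisson algebra: commutative associative product and Lie bracket linked by the Leibniz rule. -/
structure PoissonAlgebra (F P : Type*) [Field F] [AddCommGroup P] [Module F P]
    extends Dialgebra F P where
  mul_comm : ∀ x y, mul x y = mul y x
  mul_assoc : ∀ x y z, mul (mul x y) z = mul x (mul y z)
  lie_self : ∀ x, bracket x x = 0
  leibniz_lie : ∀ x y z, bracket x (bracket y z) = bracket (bracket x y) z + bracket y (bracket x z)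
  leibniz : ∀ x y z, bracket (mul x y) z = mul (bracket x z) y + mul x (bracket y z)

/-!
Minimal zero ideals are nilpotent, so `Zsoc(P) ≤ N(P)`. If `S` is a minimal ideal, the ideal
`N·S + [N,S] ⊆ S` vanishes: were it `S`, then `S` would lie in every term of the lower central
series of `N`. Hence `N(P) ≤ Ann(Soc(P))`; also `Zsoc(P) ≤ Ann(Soc(P))`, as distinct minimal
ideals multiply into their intersection `0`.

Conversely, `φ(P) = 0` lets the abelian ideal `Zsoc(P)` be complemented by a subalgebra `C`.
Then `Ann(Soc(P)) ∩ C` is an ideal, and a minimal ideal inside it annihilates itself, so it lies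
in `Zsoc(P) ∩ C = 0`. By modularity, `Ann(Soc(P)) = Zsoc(P) ⊕ (Ann(Soc(P)) ∩ C) = Zsoc(P)`.
-/

namespace Submodule

variable {R M : Type*} [CommSemiring R] [AddCommMonoid M] [Module R M]
  {f : M →ₗ[R] M →ₗ[R] M} {A B C Z : Submodule R M}

lemma map₂_sup_sup_le (hA : map₂ f A ⊤ ≤ A) (hA' : map₂ f ⊤ A ≤ A) (hB : map₂ f B B ≤ B) :
    map₂ f (A ⊔ B) (A ⊔ B) ≤ A ⊔ B := by
  have hAX {X : Submodule R M} : map₂ f A X ≤ A := (map₂_le_map₂_right le_top).trans hA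
  have hXA {X : Submodule R M} : map₂ f X A ≤ A := (map₂_le_map₂_left le_top).trans hA'
  rw [map₂_sup_left, map₂_sup_right, map₂_sup_right]
  exact sup_le (sup_le (hAX.trans le_sup_left) (hAX.trans le_sup_left))
    (sup_le (hXA.trans le_sup_left) (hB.trans le_sup_right))

lemma map₂_inf_top_le (hA : map₂ f A ⊤ ≤ A) (hC : map₂ f C C ≤ C) (hAZ : map₂ f A Z = ⊥)
    (hZC : Z ⊔ C = ⊤) : map₂ f (A ⊓ C) ⊤ ≤ A ⊓ C := by
  rw [← hZC, map₂_sup_right]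
  refine sup_le ((map₂_le_map₂_left inf_le_left).trans hAZ.le |>.trans bot_le) (le_inf ?_ ?_)
  · exact (map₂_le_map₂ inf_le_left le_top).trans hA
  · exact (map₂_le_map₂_left inf_le_right).trans hC

lemma map₂_sSup_top_le {s : Set (Submodule R M)} (h : ∀ A ∈ s, map₂ f A ⊤ ≤ A) :
    map₂ f (sSup s) ⊤ ≤ sSup s := by
  rw [sSup_eq_iSup', map₂_iSup_left]
  exact iSup_le fun A => (h A A.2).trans (le_iSup (fun A : s => (A : Submodule R M)) A)

end Submodule

open Submodule

namespace Dialgebra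

variable (D : Dialgebra F P) {A B C S T X Z : Submodule F P}

lemma pmul_eq_map₂ (A B : Submodule F P) : D.pmul A B = map₂ D.mul A B :=
  (map₂_eq_span_image2 _ _ _).symm

lemma pbra_eq_map₂ (A B : Submodule F P) : D.pbra A B = map₂ D.bracket A B :=
  (map₂_eq_span_image2 _ _ _).symm

lemma mul_mem_psq {a b : P} (ha : a ∈ A) (hb : b ∈ B) : D.mul a b ∈ D.psq A B :=
  mem_sup_left (D.pmul_eq_map₂ A B ▸ apply_mem_map₂ _ ha hb)

lemma bracket_mem_psq {a b : P} (ha : a ∈ A) (hb : b ∈ B) : D.bracket a b ∈ D.psq A B :=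
  mem_sup_right (D.pbra_eq_map₂ A B ▸ apply_mem_map₂ _ ha hb)

lemma psq_le_iff : D.psq A B ≤ C ↔ ∀ a ∈ A, ∀ b ∈ B, D.mul a b ∈ C ∧ D.bracket a b ∈ C := by
  simp only [psq, sup_le_iff, pmul_eq_map₂, pbra_eq_map₂, map₂_le]
  exact ⟨fun h a ha b hb => ⟨h.1 a ha b hb, h.2 a ha b hb⟩,
    fun h => ⟨fun a ha b hb => (h a ha b hb).1, fun a ha b hb => (h a ha b hb).2⟩⟩

lemma psq_mono {A' B' : Submodule F P} (hA : A ≤ A') (hB : B ≤ B') : D.psq A B ≤ D.psq A' B' := by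
  simp only [psq, pmul_eq_map₂, pbra_eq_map₂]
  exact sup_le_sup (map₂_le_map₂ hA hB) (map₂_le_map₂ hA hB)

lemma psq_sSup_right_le_iff {s : Set (Submodule F P)} :
    D.psq X (sSup s) ≤ C ↔ ∀ T ∈ s, D.psq X T ≤ C := by
  simp [psq, pmul_eq_map₂, pbra_eq_map₂, sSup_eq_iSup', map₂_iSup_right, forall_and]

/-- A product `p·a` is `a·p` for the flipped product, so each of the four ideal conditions takes
the one-sided form `map₂ f A ⊤ ≤ A`. -/
lemma isIdeal_iff_map₂ : D.IsIdeal A ↔ map₂ D.mul A ⊤ ≤ A ∧ map₂ D.mul.flip A ⊤ ≤ A ∧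
    map₂ D.bracket A ⊤ ≤ A ∧ map₂ D.bracket.flip A ⊤ ≤ A := by
  simp only [IsIdeal, pmul_eq_map₂, pbra_eq_map₂, map₂_flip]

lemma isSubalgebra_iff_map₂ :
    D.IsSubalgebra A ↔ map₂ D.mul A A ≤ A ∧ map₂ D.bracket A A ≤ A := by
  simp only [IsSubalgebra, psq, sup_le_iff, pmul_eq_map₂, pbra_eq_map₂]

lemma isZeroAlg_iff_psq_eq_bot : D.IsZeroAlg A ↔ D.psq A A = ⊥ := sup_eq_bot_iff.symm

def colon (C B : Submodule F P) : Submodule F P :=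
  ⨅ b ∈ B, C.comap (D.mul.flip b) ⊓ C.comap (D.bracket.flip b)

lemma mem_colon {x : P} : x ∈ D.colon C B ↔ ∀ b ∈ B, D.mul x b ∈ C ∧ D.bracket x b ∈ C := by
  simp [colon]

lemma le_colon_iff : A ≤ D.colon C B ↔ D.psq A B ≤ C := by
  rw [psq_le_iff]
  exact ⟨fun h a ha => D.mem_colon.1 (h ha), fun h a ha => D.mem_colon.2 (h a ha)⟩

lemma annih_eq_colon_bot (B : Submodule F P) : D.annih B = D.colon ⊥ B := by
  ext x
  simp [annih, mem_colon]

lemma mem_annih {x : P} : x ∈ D.annih B ↔ ∀ b ∈ B, D.mul x b = 0 ∧ D.bracket x b = 0 :=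
  Iff.rfl

lemma le_annih_iff : X ≤ D.annih B ↔ D.psq X B = ⊥ := by
  rw [annih_eq_colon_bot, le_colon_iff, le_bot_iff]

variable {D}

lemma IsIdeal.mul_mem_right (hA : D.IsIdeal A) {a : P} (ha : a ∈ A) (p : P) : D.mul a p ∈ A :=
  hA.1 (D.pmul_eq_map₂ A ⊤ ▸ apply_mem_map₂ _ ha mem_top)

lemma IsIdeal.mul_mem_left (hA : D.IsIdeal A) {a : P} (ha : a ∈ A) (p : P) : D.mul p a ∈ A :=
  hA.2.1 (D.pmul_eq_map₂ ⊤ A ▸ apply_mem_map₂ _ mem_top ha)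

lemma IsIdeal.bracket_mem_right (hA : D.IsIdeal A) {a : P} (ha : a ∈ A) (p : P) :
    D.bracket a p ∈ A :=
  hA.2.2.1 (D.pbra_eq_map₂ A ⊤ ▸ apply_mem_map₂ _ ha mem_top)

lemma IsIdeal.bracket_mem_left (hA : D.IsIdeal A) {a : P} (ha : a ∈ A) (p : P) :
    D.bracket p a ∈ A :=
  hA.2.2.2 (D.pbra_eq_map₂ ⊤ A ▸ apply_mem_map₂ _ mem_top ha)

lemma IsIdeal.psq_le_inf (hA : D.IsIdeal A) (hB : D.IsIdeal B) : D.psq A B ≤ A ⊓ B :=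
  le_inf ((D.psq_mono le_rfl le_top).trans (sup_le hA.1 hA.2.2.1))
    ((D.psq_mono le_top le_rfl).trans (sup_le hB.2.1 hB.2.2.2))

lemma IsIdeal.inf (hA : D.IsIdeal A) (hB : D.IsIdeal B) : D.IsIdeal (A ⊓ B) := by
  have key {f : P →ₗ[F] P →ₗ[F] P} (hA : map₂ f A ⊤ ≤ A) (hB : map₂ f B ⊤ ≤ B) :
      map₂ f (A ⊓ B) ⊤ ≤ A ⊓ B :=
    le_inf ((map₂_le_map₂_left inf_le_left).trans hA) ((map₂_le_map₂_left inf_le_right).trans hB)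
  rw [isIdeal_iff_map₂] at hA hB ⊢
  exact ⟨key hA.1 hB.1, key hA.2.1 hB.2.1, key hA.2.2.1 hB.2.2.1, key hA.2.2.2 hB.2.2.2⟩

lemma isIdeal_sSup {s : Set (Submodule F P)} (h : ∀ A ∈ s, D.IsIdeal A) : D.IsIdeal (sSup s) := by
  simp only [isIdeal_iff_map₂] at h ⊢
  exact ⟨map₂_sSup_top_le fun A hA => (h A hA).1, map₂_sSup_top_le fun A hA => (h A hA).2.1,
    map₂_sSup_top_le fun A hA => (h A hA).2.2.1, map₂_sSup_top_le fun A hA => (h A hA).2.2.2⟩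

lemma IsSubalgebra.inf (hA : D.IsSubalgebra A) (hB : D.IsSubalgebra B) :
    D.IsSubalgebra (A ⊓ B) :=
  le_inf ((D.psq_mono inf_le_left inf_le_left).trans hA)
    ((D.psq_mono inf_le_right inf_le_right).trans hB)

lemma IsIdeal.isSubalgebra_sup (hA : D.IsIdeal A) (hB : D.IsSubalgebra B) :
    D.IsSubalgebra (A ⊔ B) := by
  rw [isIdeal_iff_map₂, map₂_flip, map₂_flip] at hA
  rw [isSubalgebra_iff_map₂] at hB ⊢
  exact ⟨map₂_sup_sup_le hA.1 hA.2.1 hB.1, map₂_sup_sup_le hA.2.2.1 hA.2.2.2 hB.2⟩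

lemma IsIdeal.inf_of_sup_eq_top (hA : D.IsIdeal A) (hC : D.IsSubalgebra C) (hZC : Z ⊔ C = ⊤)
    (hAZ : D.psq A Z = ⊥) (hZA : D.psq Z A = ⊥) : D.IsIdeal (A ⊓ C) := by
  simp only [psq, pmul_eq_map₂, pbra_eq_map₂, sup_eq_bot_iff] at hAZ hZA
  rw [isSubalgebra_iff_map₂] at hC
  rw [isIdeal_iff_map₂] at hA ⊢
  exact ⟨map₂_inf_top_le hA.1 hC.1 hAZ.1 hZC,
    map₂_inf_top_le hA.2.1 ((map₂_flip _ _ _).trans_le hC.1) ((map₂_flip _ _ _).trans hZA.1) hZC,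
    map₂_inf_top_le hA.2.2.1 hC.2 hAZ.2 hZC,
    map₂_inf_top_le hA.2.2.2 ((map₂_flip _ _ _).trans_le hC.2) ((map₂_flip _ _ _).trans hZA.2) hZC⟩

lemma IsMinimalIdeal.inf_eq_bot (hS : D.IsMinimalIdeal S) (hT : D.IsMinimalIdeal T) (hST : S ≠ T) :
    S ⊓ T = ⊥ := by
  refine (hS.2.2 _ (hS.1.inf hT.1) inf_le_left).resolve_right fun h => hST ?_
  rcases hT.2.2 _ (hS.1.inf hT.1) inf_le_right with h' | h'
  · exact absurd (h.symm.trans h') hS.2.1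
  · exact h.symm.trans h'

lemma IsMinimalIdeal.psq_eq_bot_of_isZeroAlg (hS : D.IsMinimalIdeal S) (hS0 : D.IsZeroAlg S)
    (hT : D.IsMinimalIdeal T) : D.psq S T = ⊥ := by
  by_cases hST : S = T
  · exact hST ▸ (D.isZeroAlg_iff_psq_eq_bot).1 hS0
  · exact le_bot_iff.1 ((hS.1.psq_le_inf hT.1).trans (hS.inf_eq_bot hT hST).le)

lemma le_annih_soc_iff : X ≤ D.annih D.soc ↔ ∀ T, D.IsMinimalIdeal T → D.psq X T = ⊥ := by
  simp only [le_annih_iff, ← le_bot_iff, soc, psq_sSup_right_le_iff, Set.mem_ofPred_eq]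

section

variable (D)

lemma zsoc_le_soc : D.zsoc ≤ D.soc := sSup_le_sSup fun _ hS => hS.1

lemma isIdeal_soc : D.IsIdeal D.soc := D.isIdeal_sSup fun _ hS => hS.1

lemma isIdeal_zsoc : D.IsIdeal D.zsoc := D.isIdeal_sSup fun _ hS => hS.1.1

lemma zsoc_le_annih_soc : D.zsoc ≤ D.annih D.soc :=
  sSup_le fun _ hS => D.le_annih_soc_iff.2 fun _ hT => hS.1.psq_eq_bot_of_isZeroAlg hS.2 hT

lemma psq_zsoc_eq_bot : D.psq D.zsoc D.zsoc = ⊥ :=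
  le_bot_iff.1 ((D.psq_mono le_rfl D.zsoc_le_soc).trans
    ((D.le_annih_iff).1 D.zsoc_le_annih_soc).le)

end

lemma IsMinimalIdeal.le_zsoc_of_le_annih_soc (hS : D.IsMinimalIdeal S)
    (hSA : S ≤ D.annih D.soc) : S ≤ D.zsoc := by
  have hS0 : D.psq S S = ⊥ :=
    le_bot_iff.1 ((D.psq_mono le_rfl (le_sSup hS)).trans ((D.le_annih_iff).1 hSA).le)
  exact le_sSup ⟨hS, (D.isZeroAlg_iff_psq_eq_bot).2 hS0⟩

lemma IsZeroAlg.isNilpotentSub (hA : D.IsZeroAlg A) : D.IsNilpotentSub A :=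
  ⟨1, (D.isZeroAlg_iff_psq_eq_bot).1 hA⟩

lemma IsNilradical.zsoc_le {N : Submodule F P} (hN : D.IsNilradical N) : D.zsoc ≤ N :=
  sSup_le fun S hS => hN.2.2 S hS.1.1 hS.2.isNilpotentSub

lemma IsNilpotentSub.eq_bot_of_le_psq {N : Submodule F P} (hN : D.IsNilpotentSub N) (hSN : S ≤ N)
    (hS : S ≤ D.psq S N) : S = ⊥ := by
  have hlcs : ∀ k, S ≤ D.lcs N k := by
    intro k
    induction k with
    | zero => exact hSN
    | succ k ih => exact hS.trans (D.psq_mono ih le_rfl)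
  obtain ⟨n, hn⟩ := hN
  exact le_bot_iff.1 (hn ▸ hlcs n)

lemma exists_isMinimalIdeal_le [FiniteDimensional F P] (hA : D.IsIdeal A) (hA0 : A ≠ ⊥) :
    ∃ S, D.IsMinimalIdeal S ∧ S ≤ A := by
  obtain ⟨S, hSA, ⟨hS, hS0⟩, hmin⟩ :=
    exists_minimal_le_of_wellFoundedLT (fun S => D.IsIdeal S ∧ S ≠ ⊥) A ⟨hA, hA0⟩
  exact ⟨S, ⟨hS, hS0, fun I hI hIS =>
    or_iff_not_imp_left.2 fun hI0 => le_antisymm hIS (hmin ⟨hI, hI0⟩ hIS)⟩, hSA⟩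

lemma exists_isMaximalSubalgebraIn_not_le (hphi : D.phi = ⊥) (hA : D.IsIdeal A) (hA0 : A ≠ ⊥) :
    ∃ M, D.IsMaximalSubalgebraIn ⊤ M ∧ ¬ A ≤ M := by
  by_contra! h
  have hA_phi : A ≤ D.phi := le_sSup ⟨hA, le_inf le_top (le_sInf h)⟩
  exact hA0 (le_bot_iff.1 (hphi ▸ hA_phi))

/-- A supplement `C` of `Z` minimal among subalgebras is a complement: otherwise the ideal `Z ⊓ C`
avoids a maximal subalgebra `M`, and `M ⊓ C` is a smaller supplement. -/
lemma exists_isSubalgebra_isCompl [FiniteDimensional F P] (hphi : D.phi = ⊥)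
    (hZ : D.IsIdeal Z) (hZ0 : D.psq Z Z = ⊥) : ∃ C, D.IsSubalgebra C ∧ IsCompl Z C := by
  obtain ⟨C, ⟨hC, hZC⟩, hmin⟩ := exists_minimal_of_wellFoundedLT
    (fun C => D.IsSubalgebra C ∧ Z ⊔ C = ⊤) ⟨⊤, le_top, sup_top_eq Z⟩
  refine ⟨C, hC, IsCompl.of_eq (by_contra fun hne => ?_) hZC⟩
  have hI : D.IsIdeal (Z ⊓ C) := hZ.inf_of_sup_eq_top hC hZC hZ0 hZ0
  obtain ⟨M, hM, hIM⟩ := D.exists_isMaximalSubalgebraIn_not_le hphi hI hne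
  have hIM_top : Z ⊓ C ⊔ M = ⊤ :=
    (hM.2.2 _ (hI.isSubalgebra_sup hM.1) le_sup_right le_top).resolve_left
      fun h => hIM (h ▸ le_sup_left)
  have hC_eq : C = Z ⊓ C ⊔ M ⊓ C := by
    rw [← sup_inf_assoc_of_le M inf_le_right, hIM_top, top_inf_eq]
  have hZMC : Z ⊔ M ⊓ C = ⊤ := by
    rw [eq_top_iff, ← hZC]
    conv_lhs => rw [hC_eq]
    exact sup_le le_sup_left (sup_le (inf_le_left.trans le_sup_left) le_sup_right)
  have hCM : C ≤ M := (hmin ⟨hM.1.inf hC, hZMC⟩ inf_le_right).trans inf_le_left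
  exact hIM (inf_le_right.trans hCM)

end Dialgebra

namespace PoissonAlgebra

variable (Q : PoissonAlgebra F P) {A B I J N : Submodule F P}

lemma bracket_antisymm (x y : P) : Q.bracket x y = -Q.bracket y x := by
  have h := Q.lie_self (x + y)
  simp only [map_add, LinearMap.add_apply, Q.lie_self, zero_add, add_zero] at h
  exact eq_neg_of_add_eq_zero_right h

lemma mul_bracket (x y z : P) :
    Q.mul (Q.bracket x y) z = Q.bracket (Q.mul x z) y - Q.mul x (Q.bracket z y) := by
  rw [Q.leibniz x z y]; abel

lemma bracket_bracket (x y z : P) :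
    Q.bracket (Q.bracket x y) z = Q.bracket x (Q.bracket y z) - Q.bracket y (Q.bracket x z) := by
  rw [Q.leibniz_lie x y z]; abel

lemma psq_le_psq_swap (A B : Submodule F P) : Q.psq A B ≤ Q.psq B A :=
  Q.psq_le_iff.2 fun a ha b hb => ⟨Q.mul_comm a b ▸ Q.mul_mem_psq hb ha,
    Q.bracket_antisymm a b ▸ neg_mem (Q.bracket_mem_psq hb ha)⟩

lemma psq_comm (A B : Submodule F P) : Q.psq A B = Q.psq B A :=
  le_antisymm (Q.psq_le_psq_swap A B) (Q.psq_le_psq_swap B A)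

lemma isIdeal_iff_le_colon : Q.IsIdeal A ↔ A ≤ Q.colon A ⊤ := by
  rw [Dialgebra.le_colon_iff]
  refine ⟨fun h => sup_le h.1 h.2.2.1, fun h => ?_⟩
  have h' : Q.psq ⊤ A ≤ A := Q.psq_comm A ⊤ ▸ h
  exact ⟨le_sup_left.trans h, le_sup_left.trans h', le_sup_right.trans h, le_sup_right.trans h'⟩

lemma isIdeal_psq (hI : Q.IsIdeal I) (hJ : Q.IsIdeal J) : Q.IsIdeal (Q.psq I J) := by
  rw [isIdeal_iff_le_colon, Dialgebra.psq_le_iff]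
  intro i hi j hj
  refine ⟨Q.mem_colon.2 fun p _ => ⟨?_, ?_⟩, Q.mem_colon.2 fun p _ => ⟨?_, ?_⟩⟩
  · rw [Q.mul_assoc]
    exact Q.mul_mem_psq hi (hJ.mul_mem_right hj p)
  · rw [Q.leibniz]
    exact add_mem (Q.mul_mem_psq (hI.bracket_mem_right hi p) hj)
      (Q.mul_mem_psq hi (hJ.bracket_mem_right hj p))
  · rw [Q.mul_bracket]
    exact sub_mem (Q.bracket_mem_psq (hI.mul_mem_right hi p) hj)
      (Q.mul_mem_psq hi (hJ.bracket_mem_left hj p))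
  · rw [Q.bracket_bracket, Q.bracket_antisymm j (Q.bracket i p)]
    exact sub_mem (Q.bracket_mem_psq hi (hJ.bracket_mem_right hj p))
      (neg_mem (Q.bracket_mem_psq (hI.bracket_mem_right hi p) hj))

lemma isIdeal_annih (hB : Q.IsIdeal B) : Q.IsIdeal (Q.annih B) := by
  rw [isIdeal_iff_le_colon]
  intro x hx
  rw [Dialgebra.mem_annih] at hx
  refine Q.mem_colon.2 fun p _ =>
    ⟨Q.mem_annih.2 fun b hb => ⟨?_, ?_⟩, Q.mem_annih.2 fun b hb => ⟨?_, ?_⟩⟩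
  · rw [Q.mul_assoc, (hx _ (hB.mul_mem_left hb p)).1]
  · rw [Q.leibniz, (hx b hb).2, (hx _ (hB.bracket_mem_left hb p)).1, map_zero,
      LinearMap.zero_apply, add_zero]
  · rw [Q.mul_bracket, (hx b hb).1, (hx _ (hB.bracket_mem_right hb p)).1, map_zero,
      LinearMap.zero_apply, sub_zero]
  · rw [Q.bracket_bracket, (hx _ (hB.bracket_mem_left hb p)).2, (hx b hb).2, map_zero, sub_zero]

lemma le_annih_soc_of_isNilpotentSub (hN : Q.IsIdeal N) (hN' : Q.IsNilpotentSub N) :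
    N ≤ Q.annih Q.soc := by
  refine Q.le_annih_soc_iff.2 fun S hS => ?_
  have hNS := hN.psq_le_inf hS.1
  refine (hS.2.2 _ (Q.isIdeal_psq hN hS.1) (hNS.trans inf_le_right)).resolve_right
    fun h => hS.2.1 ?_
  exact hN'.eq_bot_of_le_psq (h.ge.trans (hNS.trans inf_le_left)) (h.ge.trans (Q.psq_comm N S).le)

lemma annih_soc_eq_zsoc [FiniteDimensional F P] (hphi : Q.phi = ⊥) : Q.annih Q.soc = Q.zsoc := by
  obtain ⟨C, hC, hZC⟩ := Q.exists_isSubalgebra_isCompl hphi Q.isIdeal_zsoc Q.psq_zsoc_eq_bot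
  have hAZ : Q.psq (Q.annih Q.soc) Q.zsoc = ⊥ :=
    le_bot_iff.1 ((Q.psq_mono le_rfl Q.zsoc_le_soc).trans (Q.le_annih_iff.1 le_rfl).le)
  have hE : Q.IsIdeal (Q.annih Q.soc ⊓ C) :=
    (Q.isIdeal_annih Q.isIdeal_soc).inf_of_sup_eq_top hC hZC.sup_eq_top hAZ (Q.psq_comm _ _ ▸ hAZ)
  have hE0 : Q.annih Q.soc ⊓ C = ⊥ := by
    by_contra hne
    obtain ⟨S, hS, hSE⟩ := Q.exists_isMinimalIdeal_le hE hne
    have hSZC : S ≤ Q.zsoc ⊓ C :=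
      le_inf (hS.le_zsoc_of_le_annih_soc (hSE.trans inf_le_left)) (hSE.trans inf_le_right)
    exact hS.2.1 (le_bot_iff.1 (hZC.inf_eq_bot ▸ hSZC))
  rw [← inf_top_eq (Q.annih Q.soc), ← hZC.sup_eq_top, inf_comm, sup_inf_assoc_of_le C
    Q.zsoc_le_annih_soc, inf_comm, hE0, sup_bot_eq]

end PoissonAlgebra

/-- In a `φ`-free Poisson algebra, `Zsoc(P) = N(P) = Ann_P(Soc(P))`. -/
theorem zsoc_eq_nilradical_eq_ann_soc {F P : Type*} [Field F] [AddCommGroup P] [Module F P]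
    [FiniteDimensional F P] (Q : PoissonAlgebra F P) (N : Submodule F P)
    (hN : Q.toDialgebra.IsNilradical N) (hphi : Q.toDialgebra.phi = ⊥) :
    Q.toDialgebra.zsoc = N ∧ N = Q.toDialgebra.annih Q.toDialgebra.soc := by
  have hZN : Q.zsoc ≤ N := hN.zsoc_le
  have hNA : N ≤ Q.annih Q.soc := Q.le_annih_soc_of_isNilpotentSub hN.1 hN.2.1
  rw [Q.annih_soc_eq_zsoc hphi] at hNA ⊢
  exact ⟨le_antisymm hZN hNA, le_antisymm hNA hZN⟩
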